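/- If a likelihood ordering on quantum events satisfies transitivity, dominance, separation, and equivalence, and the set of measurements is weight-rich, then E|M ≿ F|N implies W_M(E) ≥ W_N(F). -/

import Mathlib

/-- A quantum measurement: a finite outcome set with an additive,
normalized, nonnegative weight function on events (subsets of outcomes). -/
structure Measurement where
  S : Finset ℕ
  W : Finset ℕ → ℝ
  nonneg : ∀ E, 0 ≤ W E
  emptyW : W ∅ = 0
  totalW : W S = 1
  addW : ∀ E F : Finset ℕ, E ⊆ S → F ⊆ S → Disjoint E F → W (E ∪ F) = W E + W F

/-- A likelihood ordering on event–measurement pairs. -/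
abbrev LOrder := (Finset ℕ × Measurement) → (Finset ℕ × Measurement) → Prop

/-- E|M ≃ F|N : both directions of the likelihood ordering hold. -/
def lequiv (R : LOrder) (a b : Finset ℕ × Measurement) : Prop := R a b ∧ R b a

/-- E is null with respect to M. -/
def IsNull (R : LOrder) (E : Finset ℕ) (M : Measurement) : Prop := lequiv R (E, M) (∅, M)

/-- Transitivity axiom. -/
def TransAx (R : LOrder) : Prop := ∀ a b c, R a b → R b c → R a c

/-- Dominance axiom. -/
def DominanceAx (R : LOrder) : Prop :=
  ∀ (M : Measurement) (E F : Finset ℕ), E ⊆ F → F ⊆ M.S →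
    R (F, M) (E, M) ∧ (lequiv R (F, M) (E, M) ↔ IsNull R (F \ E) M)

/-- Separation axiom: some event is not null. -/
def SeparationAx (R : LOrder) : Prop :=
  ∃ (E : Finset ℕ) (M : Measurement), E ⊆ M.S ∧ ¬ IsNull R E M

/-- Equivalence axiom: equal weight implies equal likelihood. -/
def EquivalenceAx (R : LOrder) : Prop :=
  ∀ (M N : Measurement) (E F : Finset ℕ), E ⊆ M.S → F ⊆ N.S →
    M.W E = N.W F → lequiv R (E, M) (F, N)

/-- Weight-richness: every finite list of positive reals summing to 1 is
realized as the singleton-outcome weights of some measurement. -/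
def Rich : Prop :=
  ∀ (n : ℕ) (w : Fin n → ℝ), (∀ i, 0 < w i) → (∑ i, w i) = 1 →
    ∃ (M : Measurement) (e : Fin n ↪ ℕ),
      M.S = Finset.univ.map e ∧ ∀ i, M.W {e i} = w i

/-- `Pr` represents the likelihood ordering `R`. -/
def Represents (R : LOrder) (Pr : Finset ℕ × Measurement → ℝ) : Prop :=
  (∀ M : Measurement, Pr (∅, M) = 0) ∧
  (∀ M : Measurement, Pr (M.S, M) = 1) ∧
  (∀ (M : Measurement) (E F : Finset ℕ), E ⊆ M.S → F ⊆ M.S → Disjoint E F →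
      Pr (E ∪ F, M) = Pr (E, M) + Pr (F, M)) ∧
  (∀ a b : Finset ℕ × Measurement, a.1 ⊆ a.2.S → b.1 ⊆ b.2.S →
      (Pr a ≥ Pr b ↔ R a b))

/-!
Suppose `E|M ≿ F|N` but `a = W_M(E) < W_N(F) = b`. Weight-richness realizes events `G ⊆ H` of
weights `a` and `b` in one measurement; by equivalence `G ≿ H`, so dominance makes `H ∖ G`, of
weight `δ = b - a > 0`, null. Equivalence transports nullity along equal weights and dominance
passes it to subevents, so every event of weight at most `δ` is null. Peeling off pieces of
weight `δ`, again realized by weight-richness, then shows that every event is null, against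
separation.
-/

namespace Measurement

variable (M : Measurement)

theorem W_sdiff {E F : Finset ℕ} (hEF : E ⊆ F) (hF : F ⊆ M.S) :
    M.W (F \ E) = M.W F - M.W E := by
  have h := M.addW E (F \ E) (hEF.trans hF) (Finset.sdiff_subset.trans hF) Finset.disjoint_sdiff
  rw [Finset.union_sdiff_of_subset hEF] at h
  linarith

theorem W_le_one {E : Finset ℕ} (hE : E ⊆ M.S) : M.W E ≤ 1 := by
  have h := M.W_sdiff hE subset_rfl
  linarith [M.nonneg (M.S \ E), M.totalW]

end Measurement

namespace Rich

theorem exists_of_fintype (hR : Rich) {ι : Type*} [Fintype ι] (w : ι → ℝ)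
    (hpos : ∀ i, 0 < w i) (hsum : ∑ i, w i = 1) :
    ∃ (M : Measurement) (e : ι ↪ ℕ), M.S = Finset.univ.map e ∧ ∀ i, M.W {e i} = w i := by
  classical
  let σ := Fintype.equivFin ι
  obtain ⟨M, e, hS, hW⟩ :=
    hR _ (w ∘ σ.symm) (fun _ => hpos _) (by rw [← hsum]; exact σ.symm.sum_comp w)
  refine ⟨M, σ.toEmbedding.trans e, ?_, fun i => by simpa using hW (σ i)⟩
  rw [hS, ← Finset.map_map, Finset.map_univ_equiv]

/-- Zero weights, which weight-richness does not provide, are realized by the empty event. -/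
theorem exists_disjoint_family (hR : Rich) {ι : Type*} [Fintype ι] (w : ι → ℝ)
    (h0 : ∀ i, 0 ≤ w i) (hsum : ∑ i, w i = 1) :
    ∃ (M : Measurement) (A : ι → Finset ℕ),
      (∀ i, A i ⊆ M.S) ∧ Pairwise (fun i j => Disjoint (A i) (A j)) ∧ ∀ i, M.W (A i) = w i := by
  classical
  have hsum' : ∑ i : {i // 0 < w i}, w i = 1 := by
    rw [← Finset.sum_subtype {i | 0 < w i} (by simp), ← hsum]
    exact Finset.sum_filter_of_ne fun i _ hi => (h0 i).lt_of_ne' hi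
  obtain ⟨M, e, hS, hW⟩ := hR.exists_of_fintype _ (fun i => i.2) hsum'
  refine ⟨M, fun i => if h : 0 < w i then {e ⟨i, h⟩} else ∅, fun i => ?_, fun i j hij => ?_,
    fun i => ?_⟩
  · dsimp only
    split_ifs
    · simp [hS]
    · exact Finset.empty_subset _
  · dsimp only
    split_ifs <;> simp [hij]
  · dsimp only
    split_ifs with h
    · exact hW _
    · rw [M.emptyW]
      linarith [h0 i]

theorem exists_subset_subset (hR : Rich) {s t : ℝ} (hs : 0 ≤ s) (hst : s ≤ t) (ht : t ≤ 1) :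
    ∃ (M : Measurement) (G H : Finset ℕ), G ⊆ H ∧ H ⊆ M.S ∧ M.W G = s ∧ M.W H = t := by
  obtain ⟨M, A, hAS, hA, hW⟩ := hR.exists_disjoint_family ![s, t - s, 1 - t]
    (by intro i; fin_cases i <;> simp <;> linarith) (by simp [Fin.sum_univ_three])
  refine ⟨M, A 0, A 0 ∪ A 1, Finset.subset_union_left, Finset.union_subset (hAS 0) (hAS 1),
    hW 0, ?_⟩
  rw [M.addW _ _ (hAS 0) (hAS 1) (hA (by decide)), hW 0, hW 1]
  simp

end Rich

section Null

variable {R : LOrder}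

theorem lequiv.trans (hT : TransAx R) {a b c : Finset ℕ × Measurement}
    (hab : lequiv R a b) (hbc : lequiv R b c) : lequiv R a c :=
  ⟨hT _ _ _ hab.1 hbc.1, hT _ _ _ hbc.2 hab.2⟩

theorem IsNull.of_weight_eq (hT : TransAx R) (hE : EquivalenceAx R) {P M : Measurement}
    {D E : Finset ℕ} (hD : IsNull R D P) (hDS : D ⊆ P.S) (hES : E ⊆ M.S)
    (hW : P.W D = M.W E) : IsNull R E M :=
  ((hE M P E D hES hDS hW.symm).trans hT hD).trans hT
    (hE P M ∅ ∅ (Finset.empty_subset _) (Finset.empty_subset _) (by rw [P.emptyW, M.emptyW]))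

theorem IsNull.mono (hT : TransAx R) (hD : DominanceAx R) {M : Measurement}
    {E F : Finset ℕ} (hF : IsNull R F M) (hEF : E ⊆ F) (hFS : F ⊆ M.S) : IsNull R E M :=
  ⟨(hD M ∅ E (Finset.empty_subset _) (hEF.trans hFS)).1, hT _ _ _ hF.2 (hD M E F hEF hFS).1⟩

theorem IsNull.of_sdiff (hT : TransAx R) (hD : DominanceAx R) {M : Measurement}
    {G H : Finset ℕ} (hG : IsNull R G M) (hHG : IsNull R (H \ G) M) (hGH : G ⊆ H)
    (hHS : H ⊆ M.S) : IsNull R H M :=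
  ((hD M G H hGH hHS).2.2 hHG).trans hT hG

theorem exists_isNull_of_weight_lt (hT : TransAx R) (hD : DominanceAx R) (hE : EquivalenceAx R)
    (hR : Rich) {M N : Measurement} {E F : Finset ℕ} (hEM : E ⊆ M.S) (hFN : F ⊆ N.S)
    (h : R (E, M) (F, N)) (hlt : M.W E < N.W F) :
    ∃ (P : Measurement) (D : Finset ℕ), D ⊆ P.S ∧ P.W D = N.W F - M.W E ∧ IsNull R D P := by
  obtain ⟨P, G, H, hGH, hHS, hWG, hWH⟩ :=
    hR.exists_subset_subset (M.nonneg E) hlt.le (N.W_le_one hFN)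
  have hGS : G ⊆ P.S := hGH.trans hHS
  have hGH_rel : R (G, P) (H, P) :=
    hT _ _ _ (hT _ _ _ (hE M P E G hEM hGS hWG.symm).2 h) (hE N P F H hFN hHS hWH.symm).1
  have hdom := hD P G H hGH hHS
  exact ⟨P, H \ G, Finset.sdiff_subset.trans hHS, by rw [P.W_sdiff hGH hHS, hWG, hWH],
    hdom.2.1 ⟨hdom.1, hGH_rel⟩⟩

theorem IsNull.of_weight_le (hT : TransAx R) (hD : DominanceAx R) (hE : EquivalenceAx R)
    (hR : Rich) {P M : Measurement} {D E : Finset ℕ} (hnull : IsNull R D P) (hDS : D ⊆ P.S)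
    (hES : E ⊆ M.S) (hle : M.W E ≤ P.W D) : IsNull R E M := by
  obtain ⟨Q, G, H, hGH, hHS, hWG, hWH⟩ :=
    hR.exists_subset_subset (M.nonneg E) hle (P.W_le_one hDS)
  have hH : IsNull R H Q := hnull.of_weight_eq hT hE hDS hHS hWH.symm
  exact (hH.mono hT hD hGH hHS).of_weight_eq hT hE (hGH.trans hHS) hES hWG

theorem isNull_of_forall_weight_le (hT : TransAx R) (hD : DominanceAx R) (hE : EquivalenceAx R)
    (hR : Rich) {δ : ℝ} (hδ : 0 < δ)
    (hsmall : ∀ (M : Measurement) (E : Finset ℕ), E ⊆ M.S → M.W E ≤ δ → IsNull R E M)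
    (M : Measurement) {E : Finset ℕ} (hES : E ⊆ M.S) : IsNull R E M := by
  suffices key : ∀ k : ℕ, ∀ (M : Measurement) (E : Finset ℕ), E ⊆ M.S → M.W E ≤ k * δ →
      IsNull R E M by
    obtain ⟨k, hk⟩ := Archimedean.arch (1 : ℝ) hδ
    exact key k M E hES ((M.W_le_one hES).trans (by rwa [nsmul_eq_mul] at hk))
  intro k
  induction k with
  | zero =>
    intro M E hES hle
    exact hsmall M E hES (by push_cast at hle; linarith)
  | succ k ih =>
    intro M E hES hle
    by_cases hsm : M.W E ≤ δ
    · exact hsmall M E hES hsm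
    obtain ⟨Q, G, H, hGH, hHS, hWG, hWH⟩ := hR.exists_subset_subset (s := M.W E - δ)
      (by linarith) (by linarith) (M.W_le_one hES)
    have hG : IsNull R G Q := ih Q G (hGH.trans hHS) (by push_cast at hle; linarith)
    have hHG : IsNull R (H \ G) Q :=
      hsmall Q _ (Finset.sdiff_subset.trans hHS) (by rw [Q.W_sdiff hGH hHS]; linarith)
    exact (hG.of_sdiff hT hD hHG hGH hHS).of_weight_eq hT hE hHS hES hWH

end Null

/-- Lemma 3: at-least-as-likely implies greater-or-equal weight. -/
theorem stmt2 (R : LOrder) (hT : TransAx R) (hD : DominanceAx R)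
    (hS : SeparationAx R) (hE : EquivalenceAx R) (hR : Rich)
    (M N : Measurement) (E F : Finset ℕ) (hEM : E ⊆ M.S) (hFN : F ⊆ N.S)
    (h : R (E, M) (F, N)) : M.W E ≥ N.W F := by
  by_contra! hlt
  obtain ⟨P, D, hDS, hWD, hnull⟩ := exists_isNull_of_weight_lt hT hD hE hR hEM hFN h hlt
  obtain ⟨E₀, M₀, hE₀S, hE₀⟩ := hS
  refine hE₀ (isNull_of_forall_weight_le hT hD hE hR (sub_pos.2 hlt) ?_ M₀ hE₀S)
  exact fun M' E' hE'S hle => hnull.of_weight_le hT hD hE hR hDS hE'S (hWD ▸ hle)
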